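/- Let A be a Frobenius category with ω the subcategory of projectives, and let I be an ideal of A with ω ⊆ Ob(I). Suppose I/ω is a special precovering ideal in the triangulated category A/ω, and let C be an object of A. Then C admits a special I-precover i': X_C → C in A; more precisely, i' can be chosen to be a deflation whose kernel morphism k: Y' → B' (arising from the comparison of conflations) lies in I^⊥. -/
import Mathlib


open CategoryTheory CategoryTheory.Limits

universe w v u

variable {C : Type u} [Category.{v} C] [Preadditive C]

/-- A class of morphisms in a category. -/
abbrev MorClass (C : Type u) [Category.{v} C] : Type _ :=
  ∀ ⦃X Y : C⦄, (X ⟶ Y) → Prop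

/-- An ideal of a preadditive category: an additive subbifunctor of `Hom`,
i.e. for each pair of objects a subgroup of morphisms, closed under two-sided
composition with arbitrary morphisms. -/
structure CatIdeal (C : Type u) [Category.{v} C] [Preadditive C] where
  carrier : MorClass C
  zero_mem : ∀ (X Y : C), carrier (0 : X ⟶ Y)
  add_mem : ∀ ⦃X Y : C⦄ ⦃f g : X ⟶ Y⦄, carrier f → carrier g → carrier (f + g)
  neg_mem : ∀ ⦃X Y : C⦄ ⦃f : X ⟶ Y⦄, carrier f → carrier (-f)
  comp_left_mem : ∀ ⦃W X Y : C⦄ (e : W ⟶ X) ⦃f : X ⟶ Y⦄, carrier f → carrier (e ≫ f)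
  comp_right_mem : ∀ ⦃X Y Z : C⦄ ⦃f : X ⟶ Y⦄ (e : Y ⟶ Z), carrier f → carrier (f ≫ e)

/-- An exact structure on a preadditive category: a distinguished class of
kernel-cokernel pairs ("conflations"). -/
structure ExactStructure (C : Type u) [Category.{v} C] [Preadditive C] where
  IsConflation : ∀ ⦃X Y Z : C⦄, (X ⟶ Y) → (Y ⟶ Z) → Prop
  comp_zero : ∀ ⦃X Y Z : C⦄ ⦃i : X ⟶ Y⦄ ⦃p : Y ⟶ Z⦄, IsConflation i p → i ≫ p = 0
  isKernel : ∀ ⦃X Y Z : C⦄ ⦃i : X ⟶ Y⦄ ⦃p : Y ⟶ Z⦄, IsConflation i p →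
      ∀ ⦃W : C⦄ (g : W ⟶ Y), g ≫ p = 0 → ∃! h : W ⟶ X, h ≫ i = g
  isCokernel : ∀ ⦃X Y Z : C⦄ ⦃i : X ⟶ Y⦄ ⦃p : Y ⟶ Z⦄, IsConflation i p →
      ∀ ⦃W : C⦄ (g : Y ⟶ W), i ≫ g = 0 → ∃! h : Z ⟶ W, p ≫ h = g

namespace ExactStructure

variable (E : ExactStructure C)

/-- A deflation (admissible epimorphism). -/
def Deflation {Y Z : C} (p : Y ⟶ Z) : Prop := ∃ (X : C) (i : X ⟶ Y), E.IsConflation i p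

/-- An inflation (admissible monomorphism). -/
def Inflation {X Y : C} (i : X ⟶ Y) : Prop := ∃ (Z : C) (p : Y ⟶ Z), E.IsConflation i p

/-- Projective object relative to the exact structure. -/
def Projective (P : C) : Prop :=
  ∀ ⦃Y Z : C⦄ (p : Y ⟶ Z), E.Deflation p → ∀ f : P ⟶ Z, ∃ g : P ⟶ Y, g ≫ p = f

/-- Injective object relative to the exact structure. -/
def Injective (Q : C) : Prop :=
  ∀ ⦃X Y : C⦄ (i : X ⟶ Y), E.Inflation i → ∀ f : X ⟶ Q, ∃ g : Y ⟶ Q, i ≫ g = f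

/-- Ext-orthogonality of morphisms `a : A₀ ⟶ A₁` and `b : B₀ ⟶ B₁`:
`Ext(a,b) : Ext(A₁,B₀) → Ext(A₀,B₁)` is zero.  Elementwise: whenever a
conflation `B₀ ↣ W ↠ A₀` maps to a conflation `B₀ ↣ Z ↠ A₁` by a morphism
of conflations of the form `(𝟙, g, a)` (so that the first is the pullback of
the second along `a`), the pushout along `b` splits, i.e. `b` extends over
the inflation `B₀ ↣ W`. -/
def ExtOrth {A₀ A₁ B₀ B₁ : C} (a : A₀ ⟶ A₁) (b : B₀ ⟶ B₁) : Prop :=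
  ∀ ⦃Z W : C⦄ (i : B₀ ⟶ Z) (p : Z ⟶ A₁) (i' : B₀ ⟶ W) (p' : W ⟶ A₀) (g : W ⟶ Z),
    E.IsConflation i p → E.IsConflation i' p' → i' ≫ g = i → p' ≫ a = g ≫ p →
    ∃ u : W ⟶ B₁, i' ≫ u = b

/-- The right Ext-orthogonal class of a class of morphisms. -/
def rightOrth (S : MorClass C) : MorClass C :=
  fun _ _ b => ∀ ⦃A₀ A₁ : C⦄ (a : A₀ ⟶ A₁), S a → E.ExtOrth a b

/-- The left Ext-orthogonal class of a class of morphisms. -/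
def leftOrth (S : MorClass C) : MorClass C :=
  fun _ _ a => ∀ ⦃B₀ B₁ : C⦄ (b : B₀ ⟶ B₁), S b → E.ExtOrth a b

/-- `Ext¹(X,Y) = 0` for objects: every conflation `Y ↣ Z ↠ X` splits. -/
def ExtVanish (X Y : C) : Prop :=
  ∀ ⦃Z : C⦄ (i : Y ⟶ Z) (p : Z ⟶ X), E.IsConflation i p → ∃ r : Z ⟶ Y, i ≫ r = 𝟙 Y

end ExactStructure

section Approximations

variable (S : MorClass C)

/-- `f : A ⟶ X` is an `S`-precover of `X`. -/
def IsPrecover {A X : C} (f : A ⟶ X) : Prop :=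
  S f ∧ ∀ ⦃A' : C⦄ (f' : A' ⟶ X), S f' → ∃ h : A' ⟶ A, h ≫ f = f'

/-- `S` is a precovering class of morphisms. -/
def Precovering : Prop := ∀ X : C, ∃ (A : C) (f : A ⟶ X), IsPrecover S f

/-- `f : X ⟶ B` is an `S`-preenvelope of `X`. -/
def IsPreenvelope {X B : C} (f : X ⟶ B) : Prop :=
  S f ∧ ∀ ⦃B' : C⦄ (f' : X ⟶ B'), S f' → ∃ h : B ⟶ B', f ≫ h = f'

/-- `S` is a preenveloping class of morphisms. -/
def Preenveloping : Prop := ∀ X : C, ∃ (B : C) (f : X ⟶ B), IsPreenvelope S f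

end Approximations

namespace ExactStructure

variable (E : ExactStructure C) (S : MorClass C)

/-- A special `S`-precover in an exact category: a deflation `f : A ↠ X` in `S`
which is an `S`-precover fitting in a pushout diagram of conflations
`K ↣ A' ↠ X` over `K' ↣ A ↠ X` with connecting morphism `g : K ⟶ K'`
right Ext-orthogonal to `S`. -/
def IsSpecialPrecover {A X : C} (f : A ⟶ X) : Prop :=
  IsPrecover S f ∧
  ∃ (K A' K' : C) (i₁ : K ⟶ A') (p₁ : A' ⟶ X) (i₂ : K' ⟶ A) (g : K ⟶ K') (h : A' ⟶ A),
    E.IsConflation i₁ p₁ ∧ E.IsConflation i₂ f ∧ i₁ ≫ h = g ≫ i₂ ∧ h ≫ f = p₁ ∧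
    E.rightOrth S g

def SpecialPrecovering : Prop := ∀ X : C, ∃ (A : C) (f : A ⟶ X), E.IsSpecialPrecover S f

/-- A special `S`-preenvelope in an exact category (dual notion). -/
def IsSpecialPreenvelope {X B : C} (j : X ⟶ B) : Prop :=
  IsPreenvelope S j ∧
  ∃ (V Z W : C) (q : B ⟶ V) (z : X ⟶ Z) (w : Z ⟶ W) (t : B ⟶ Z) (h : V ⟶ W),
    E.IsConflation j q ∧ E.IsConflation z w ∧ j ≫ t = z ∧ t ≫ w = q ≫ h ∧
    E.leftOrth S h

def SpecialPreenveloping : Prop := ∀ X : C, ∃ (B : C) (j : X ⟶ B), E.IsSpecialPreenvelope S j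

/-- An ideal cotorsion pair (on the level of morphism classes). -/
def IdealCotorsionPair (I J : MorClass C) : Prop :=
  I = E.leftOrth J ∧ J = E.rightOrth I

/-- A complete ideal cotorsion pair in an exact category. -/
def CompleteIdealCotorsionPair (I J : MorClass C) : Prop :=
  E.IdealCotorsionPair I J ∧ E.SpecialPrecovering I ∧ E.SpecialPreenveloping J

/-- A cotorsion pair of classes of objects. -/
def ObjCotorsionPair (𝒳 𝒴 : C → Prop) : Prop :=
  (∀ A : C, 𝒳 A ↔ ∀ B : C, 𝒴 B → E.ExtVanish A B) ∧
  (∀ B : C, 𝒴 B ↔ ∀ A : C, 𝒳 A → E.ExtVanish A B)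

/-- A complete cotorsion pair of classes of objects. -/
def CompleteObjCotorsionPair (𝒳 𝒴 : C → Prop) : Prop :=
  E.ObjCotorsionPair 𝒳 𝒴 ∧
  ∀ M : C,
    (∃ (Ym Xm : C) (i : Ym ⟶ Xm) (p : Xm ⟶ M), E.IsConflation i p ∧ 𝒳 Xm ∧ 𝒴 Ym) ∧
    (∃ (Ym Xm : C) (i : M ⟶ Ym) (p : Ym ⟶ Xm), E.IsConflation i p ∧ 𝒴 Ym ∧ 𝒳 Xm)

end ExactStructure

/-- A Frobenius category: an exact category with enough projectives and enough
injectives in which the projective and the injective objects coincide. -/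
structure FrobeniusCat (C : Type u) [Category.{v} C] [Preadditive C] extends ExactStructure C where
  enough_projectives : ∀ X : C, ∃ (P : C) (p : P ⟶ X),
    toExactStructure.Projective P ∧ toExactStructure.Deflation p
  enough_injectives : ∀ X : C, ∃ (Q : C) (i : X ⟶ Q),
    toExactStructure.Injective Q ∧ toExactStructure.Inflation i
  projective_iff_injective : ∀ X : C, toExactStructure.Projective X ↔ toExactStructure.Injective X

namespace FrobeniusCat

variable (F : FrobeniusCat C)

/-- `f` factors through a projective object. -/
def FactorsThruProj {X Y : C} (f : X ⟶ Y) : Prop :=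
  ∃ (P : C) (u : X ⟶ P) (v : P ⟶ Y), F.toExactStructure.Projective P ∧ u ≫ v = f

/-- Two parallel morphisms become equal in the stable category `A/ω`. -/
def StEq {X Y : C} (f g : X ⟶ Y) : Prop := F.FactorsThruProj (f - g)

/-- `e` becomes an isomorphism in the stable category. -/
def StIso {X Y : C} (e : X ⟶ Y) : Prop :=
  ∃ e' : Y ⟶ X, F.StEq (e ≫ e') (𝟙 X) ∧ F.StEq (e' ≫ e) (𝟙 Y)

/-- The image `S/ω` of a class of morphisms in the stable category, described by
representatives: `f` lies in `S/ω` iff it is stably equal to a member of `S`. -/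
def stImage (S : MorClass C) : MorClass C := fun X Y f => ∃ g : X ⟶ Y, S g ∧ F.StEq f g

/-- Left orthogonality `f ⊥ g` in the triangulated stable category `A/ω`:
for every model of the suspension functor on `g` (given by conflations into
projective-injective objects) and every `φ : A ⟶ B[1]`, the composite
`g[1] ∘ φ ∘ f` vanishes in `A/ω`. -/
def StOrth {X A B Y : C} (f : X ⟶ A) (g : B ⟶ Y) : Prop :=
  ∀ ⦃P B' Q Y' : C⦄ (αB : B ⟶ P) (βB : P ⟶ B') (αY : Y ⟶ Q) (βY : Q ⟶ Y')
    (g' : B' ⟶ Y') (ι : P ⟶ Q),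
    F.toExactStructure.Projective P → F.toExactStructure.Projective Q →
    F.toExactStructure.IsConflation αB βB → F.toExactStructure.IsConflation αY βY →
    αB ≫ ι = g ≫ αY → ι ≫ βY = βB ≫ g' →
    ∀ φ : A ⟶ B', F.FactorsThruProj (f ≫ φ ≫ g')

/-- The right orthogonal class in the stable category. -/
def stRightOrth (S : MorClass C) : MorClass C :=
  fun _ _ b => ∀ ⦃A₀ A₁ : C⦄ (a : A₀ ⟶ A₁), S a → F.StOrth a b

/-- The left orthogonal class in the stable category. -/
def stLeftOrth (S : MorClass C) : MorClass C :=
  fun _ _ a => ∀ ⦃B₀ B₁ : C⦄ (b : B₀ ⟶ B₁), S b → F.StOrth a b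

/-- An `S`-precover in the stable category `A/ω` (objects of `A/ω` are those
of `A`, morphisms are represented by morphisms of `A`). -/
def StIsPrecover (S : MorClass C) {A X : C} (f : A ⟶ X) : Prop :=
  S f ∧ ∀ ⦃A' : C⦄ (f' : A' ⟶ X), S f' → ∃ h : A' ⟶ A, F.StEq (h ≫ f) f'

def StPrecovering (S : MorClass C) : Prop := ∀ X : C, ∃ (A : C) (f : A ⟶ X), F.StIsPrecover S f

def StIsPreenvelope (S : MorClass C) {X B : C} (f : X ⟶ B) : Prop :=
  S f ∧ ∀ ⦃B' : C⦄ (f' : X ⟶ B'), S f' → ∃ h : B ⟶ B', F.StEq (f ≫ h) f'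

def StPreenveloping (S : MorClass C) : Prop := ∀ X : C, ∃ (B : C) (f : X ⟶ B), F.StIsPreenvelope S f

/-- A special `S`-precover in the triangulated stable category `A/ω`:
a homotopy pushout diagram of distinguished triangles over `i` whose connecting
morphism `j` lies in `S^⊥`.  Distinguished triangles in `A/ω` are, up to stable
isomorphism, induced by conflations of `A`; accordingly the diagram is encoded by
a morphism of conflations `(j, t, 𝟙)` in `A` together with a stable isomorphism
`e` identifying the second row with (the triangle of) `i`. -/
def StIsSpecialPrecover (S : MorClass C) {X A : C} (i : X ⟶ A) : Prop :=
  F.StIsPrecover S i ∧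
  ∃ (Y Z B X₀ : C) (y : Y ⟶ Z) (z : Z ⟶ A) (b : B ⟶ X₀) (x : X₀ ⟶ A)
    (j : Y ⟶ B) (t : Z ⟶ X₀) (e : X₀ ⟶ X),
    F.toExactStructure.IsConflation y z ∧ F.toExactStructure.IsConflation b x ∧
    y ≫ t = j ≫ b ∧ t ≫ x = z ∧ F.StIso e ∧ F.StEq x (e ≫ i) ∧
    F.stRightOrth S j

def StSpecialPrecovering (S : MorClass C) : Prop :=
  ∀ A : C, ∃ (X : C) (i : X ⟶ A), F.StIsSpecialPrecover S i

/-- A special `S`-preenvelope in the triangulated stable category `A/ω`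
(dual to `StIsSpecialPrecover`): a homotopy pullback diagram with connecting
morphism `h` in `^⊥S`. -/
def StIsSpecialPreenvelope (S : MorClass C) {X B : C} (j : X ⟶ B) : Prop :=
  F.StIsPreenvelope S j ∧
  ∃ (B₀ V Z W : C) (b : X ⟶ B₀) (q : B₀ ⟶ V) (z : X ⟶ Z) (w : Z ⟶ W)
    (t : B₀ ⟶ Z) (h : V ⟶ W) (e : B₀ ⟶ B),
    F.toExactStructure.IsConflation b q ∧ F.toExactStructure.IsConflation z w ∧
    b ≫ t = z ∧ t ≫ w = q ≫ h ∧ F.StIso e ∧ F.StEq (b ≫ e) j ∧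
    F.stLeftOrth S h

def StSpecialPreenveloping (S : MorClass C) : Prop :=
  ∀ X : C, ∃ (B : C) (j : X ⟶ B), F.StIsSpecialPreenvelope S j

/-- An ideal cotorsion pair in the stable category (classes given by
representatives in `A`). -/
def StIdealCotorsionPair (I J : MorClass C) : Prop :=
  I = F.stLeftOrth J ∧ J = F.stRightOrth I

/-- A complete ideal cotorsion pair in the stable category. -/
def StCompleteIdealCotorsionPair (I J : MorClass C) : Prop :=
  F.StIdealCotorsionPair I J ∧ F.StSpecialPrecovering I ∧ F.StSpecialPreenveloping J

end FrobeniusCat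

section Aux

variable (F : FrobeniusCat C) (I : CatIdeal C)

lemma factorsThruProj_neg {X Y : C} {f : X ⟶ Y} (h : F.FactorsThruProj f) :
    F.FactorsThruProj (-f) := by
  obtain ⟨P, u, v, hP, huv⟩ := h
  exact ⟨P, u, -v, hP, by simp [huv]⟩

lemma factorsThruProj_comp_left {X Y Z : C} (e : X ⟶ Y) {f : Y ⟶ Z}
    (h : F.FactorsThruProj f) : F.FactorsThruProj (e ≫ f) := by
  obtain ⟨P, u, v, hP, huv⟩ := h
  exact ⟨P, e ≫ u, v, hP, by rw [Category.assoc, huv]⟩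

lemma factorsThruProj_comp_right {X Y Z : C} {f : X ⟶ Y} (e : Y ⟶ Z)
    (h : F.FactorsThruProj f) : F.FactorsThruProj (f ≫ e) := by
  obtain ⟨P, u, v, hP, huv⟩ := h
  exact ⟨P, u, v ≫ e, hP, by rw [← Category.assoc, huv]⟩

lemma stEq_refl {X Y : C} (f : X ⟶ Y) : F.StEq f f := by
  obtain ⟨P, p, hP, -⟩ := F.enough_projectives X
  exact ⟨P, 0, 0, hP, by simp⟩

lemma mem_of_factorsThruProj (hω : ∀ P : C, F.toExactStructure.Projective P → I.carrier (𝟙 P))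
    {X Y : C} {f : X ⟶ Y} (h : F.FactorsThruProj f) : I.carrier f := by
  obtain ⟨P, u, v, hP, huv⟩ := h
  have : I.carrier (u ≫ (𝟙 P ≫ v)) :=
    I.comp_left_mem u (I.comp_right_mem v (hω P hP))
  simpa [huv] using this

lemma mem_of_stEq (hω : ∀ P : C, F.toExactStructure.Projective P → I.carrier (𝟙 P))
    {X Y : C} {f g : X ⟶ Y} (h : F.StEq f g) (hg : I.carrier g) : I.carrier f := by
  have h1 : I.carrier (f - g) := mem_of_factorsThruProj F I hω h
  have := I.add_mem h1 hg
  simpa using this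

lemma lift_of_factorsThruProj {X Y Z : C} {f : X ⟶ Y} {x : Z ⟶ Y}
    (hf : F.FactorsThruProj f) (hx : F.toExactStructure.Deflation x) :
    ∃ l : X ⟶ Z, l ≫ x = f := by
  obtain ⟨P, u, v, hP, huv⟩ := hf
  obtain ⟨v', hv'⟩ := hP x hx v
  exact ⟨u ≫ v', by rw [Category.assoc, hv', huv]⟩

/-- Stable orthogonality implies exact Ext-orthogonality. -/
lemma extOrth_of_stOrth {A₀ A₁ Y B : C} (a : A₀ ⟶ A₁) (j : Y ⟶ B)
    (h : F.StOrth a j) : F.toExactStructure.ExtOrth a j := by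
  intro Z₁ W i p i' p' g₂ hip hi'p' hig hpg
  -- suspension of Y
  obtain ⟨Q₁, αB, hQ₁inj, B', βB, hconfB⟩ := F.enough_injectives Y
  have hQ₁ : F.toExactStructure.Projective Q₁ := (F.projective_iff_injective Q₁).2 hQ₁inj
  -- suspension of B
  obtain ⟨Q₂, αY, hQ₂inj, Y', βY, hconfY⟩ := F.enough_injectives B
  have hQ₂ : F.toExactStructure.Projective Q₂ := (F.projective_iff_injective Q₂).2 hQ₂inj
  -- ι : Q₁ ⟶ Q₂ extending j ≫ αY
  obtain ⟨ι, hι⟩ := hQ₂inj αB ⟨B', βB, hconfB⟩ (j ≫ αY)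
  -- g' : B' ⟶ Y'
  have h0 : αB ≫ (ι ≫ βY) = 0 := by
    rw [← Category.assoc, hι, Category.assoc, F.toExactStructure.comp_zero hconfY,
      Limits.comp_zero]
  obtain ⟨g', hg', -⟩ := F.toExactStructure.isCokernel hconfB (ι ≫ βY) h0
  -- s : Z₁ ⟶ Q₁ extending αB over i
  obtain ⟨s, hs⟩ := hQ₁inj i ⟨A₁, p, hip⟩ αB
  -- φ : A₁ ⟶ B'
  have h1 : i ≫ (s ≫ βB) = 0 := by
    rw [← Category.assoc, hs, F.toExactStructure.comp_zero hconfB]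
  obtain ⟨φ, hφ, -⟩ := F.toExactStructure.isCokernel hip (s ≫ βB) h1
  -- stable orthogonality gives a ≫ φ ≫ g' factors through a projective
  obtain ⟨R, u₁, v₁, hR, huv⟩ :=
    h αB βB αY βY g' ι hQ₁ hQ₂ hconfB hconfY hι hg'.symm φ
  -- lift v₁ through the deflation βY
  obtain ⟨v₂, hv₂⟩ := hR βY ⟨B, αY, hconfY⟩ v₁
  -- the corrected map m : W ⟶ Q₂
  set m : W ⟶ Q₂ := g₂ ≫ s ≫ ι - p' ≫ u₁ ≫ v₂ with hm
  have hmβ : m ≫ βY = 0 := by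
    have e1 : (g₂ ≫ s ≫ ι) ≫ βY = p' ≫ a ≫ φ ≫ g' := by
      simp only [Category.assoc]
      rw [← hg', ← reassoc_of% hφ, ← Category.assoc, ← hpg, Category.assoc]
    have e2 : (p' ≫ u₁ ≫ v₂) ≫ βY = p' ≫ a ≫ φ ≫ g' := by
      rw [Category.assoc, Category.assoc, hv₂, huv]
    rw [hm, Preadditive.sub_comp, e1, e2, sub_self]
  obtain ⟨u, hu, -⟩ := F.toExactStructure.isKernel hconfY m hmβ
  refine ⟨u, ?_⟩
  -- αY is mono via kernel uniqueness
  have hi'm : i' ≫ m = j ≫ αY := by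
    have hip' : i' ≫ p' = 0 := F.toExactStructure.comp_zero hi'p'
    have : i' ≫ (g₂ ≫ s ≫ ι) = j ≫ αY := by
      rw [← Category.assoc, hig, ← Category.assoc, hs, hι]
    rw [hm, Preadditive.comp_sub, this, ← Category.assoc, hip']
    simp
  have hjz : (j ≫ αY) ≫ βY = 0 := by
    rw [Category.assoc, F.toExactStructure.comp_zero hconfY, Limits.comp_zero]
  obtain ⟨w, -, hwuniq⟩ := F.toExactStructure.isKernel hconfY (j ≫ αY) hjz
  have e1 : (i' ≫ u) ≫ αY = j ≫ αY := by rw [Category.assoc, hu, hi'm]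
  have e2 := hwuniq (i' ≫ u) e1
  have e3 := hwuniq j rfl
  rw [e2, ← e3]

end Aux

/-- if `I/ω` is special precovering in the triangulated stable
category `A/ω`, then every object of `A` admits a special `I`-precover in the
exact category `A` (a deflation whose comparison-of-conflations morphism lies
in `I^⊥`). -/
theorem stmt16 (F : FrobeniusCat C) (I : CatIdeal C)
    (hω : ∀ P : C, F.toExactStructure.Projective P → I.carrier (𝟙 P))
    (hsp : F.StSpecialPrecovering (F.stImage I.carrier)) (A : C) :
    ∃ (X : C) (i' : X ⟶ A), F.toExactStructure.IsSpecialPrecover I.carrier i' := by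
  obtain ⟨X, i, hpre, Y, Z, B, X₀, y, z, b, x, j, t, e, hyz, hbx, hyt, htx,
    ⟨e', hee', he'e⟩, hxe, hj⟩ := hsp A
  have hxdefl : F.toExactStructure.Deflation x := ⟨B, b, hbx⟩
  -- i is in I
  obtain ⟨i₀, hi₀, hii₀⟩ := hpre.1
  have hiI : I.carrier i := mem_of_stEq F I hω hii₀ hi₀
  -- x is in I
  have hxI : I.carrier x := mem_of_stEq F I hω hxe (I.comp_left_mem e hiI)
  refine ⟨X₀, x, ⟨hxI, ?_⟩, Y, Z, B, y, z, b, j, t, hyz, hbx, hyt, htx, ?_⟩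
  · -- precover property
    intro A' f' hf'
    obtain ⟨h₀, hh₀⟩ := hpre.2 f' ⟨f', hf', stEq_refl F f'⟩
    -- f' = h₀ ≫ i + w₁ etc.
    have hw₁ : F.FactorsThruProj (f' - h₀ ≫ i) :=
      factorsThruProj_neg F hh₀ |>.imp (fun P hP => by
        obtain ⟨u, v, hPp, huv⟩ := hP
        exact ⟨u, v, hPp, by rw [huv]; abel⟩)
    obtain ⟨l₁, hl₁⟩ := lift_of_factorsThruProj F hw₁ hxdefl
    -- h₀ ≫ w₃ ≫ i where w₃ = e' ≫ e - 𝟙 X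
    have hw₃ : F.FactorsThruProj ((h₀ ≫ (e' ≫ e - 𝟙 X)) ≫ i) :=
      factorsThruProj_comp_right F i (factorsThruProj_comp_left F h₀ he'e)
    obtain ⟨l₂, hl₂⟩ := lift_of_factorsThruProj F hw₃ hxdefl
    -- h₀ ≫ e' ≫ w₂ where w₂ = x - e ≫ i
    have hw₂ : F.FactorsThruProj ((h₀ ≫ e') ≫ (x - e ≫ i)) :=
      factorsThruProj_comp_left F (h₀ ≫ e') hxe
    obtain ⟨l₃, hl₃⟩ := lift_of_factorsThruProj F hw₂ hxdefl
    refine ⟨h₀ ≫ e' - l₃ - l₂ + l₁, ?_⟩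
    rw [Preadditive.add_comp, Preadditive.sub_comp, Preadditive.sub_comp,
      hl₁, hl₂, hl₃]
    simp only [Preadditive.comp_sub, Preadditive.sub_comp, Preadditive.comp_add,
      Preadditive.add_comp, Category.id_comp, Category.assoc]
    abel
  · -- j is right Ext-orthogonal to I
    intro A₀ A₁ a ha
    exact extOrth_of_stOrth F a j (hj a ⟨a, ha, stEq_refl F a⟩)
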